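/- arXiv:1710.03395 — 2 statements merged into one kernel-verified Lean document; each statement's English description precedes it below -/
import Mathlib

section
/- Let x ∈ Substr(D) be nonempty and let (x_i) be the suffix-link chain of x (so x_0 = x). Then for every suffix y of x there exists an index i ≥ 0 such that x_i is defined and y ≡_D x_i. In other words, up to ≡_D-equivalence, the suffix-link chain of x visits every suffix of x. -/
variable {α : Type*}

/-- The set of substrings (contiguous factors, including ε) of patterns in `D`. -/
def Substr (D : Finset (List α)) : Set (List α) := {x | ∃ p ∈ D, x <:+: p}

/-- The set of prefixes (including ε) of patterns in `D`. -/
def Pref (D : Finset (List α)) : Set (List α) := {x | ∃ p ∈ D, x <+: p}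

/-- `ePos D x` : pattern/end-position pairs (1-based end position `j`) at which `x`
occurs in a pattern of `D`, i.e. `x = q[j-|x|+1..j]`. -/
def ePos (D : Finset (List α)) (x : List α) : Set (List α × ℕ) :=
  {qj | qj.1 ∈ D ∧ x.length ≤ qj.2 ∧ qj.2 ≤ qj.1.length ∧
        x = (qj.1.take qj.2).drop (qj.2 - x.length)}

/-- `x ≡_D y` iff `ePos(x,D) = ePos(y,D)`. -/
def eqv (D : Finset (List α)) (x y : List α) : Prop := ePos D x = ePos D y

/-- Suffix link: the longest suffix `y` of `x` with `y ≢_D x` (`x.tails` lists the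
suffixes of `x` in decreasing length order, so `headI` of the filtered list is the
longest suffix that is not `≡_D`-equivalent to `x`). -/
noncomputable def slink (D : Finset (List α)) (x : List α) : List α :=
  letI := Classical.propDecidable
  (x.tails.filter (fun y => decide (¬ eqv D x y))).headI

lemma suffix_headI_filter (p : List α → Bool) :
    ∀ (l y : List α), y <:+ l → p y = true → y <:+ (l.tails.filter p).headI := by
  intro l
  induction l with
  | nil =>
    intro y hy hp
    have : y = [] := List.suffix_nil.mp hy
    subst this
    simp [hp]
  | cons a t ih =>
    intro y hy hp
    rw [List.tails_cons, List.filter_cons]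
    by_cases h : p (a :: t) = true
    · simp [h]; exact hy
    · have hne : y ≠ a :: t := by rintro rfl; exact h hp
      have hyt : y <:+ t := (List.suffix_cons_iff.mp hy).resolve_left hne
      simp only [h]
      simpa using ih y hyt hp

lemma not_eqv_nil (D : Finset (List α)) (hDne : D.Nonempty) (x : List α) (h0 : x ≠ []) :
    ¬ eqv D x [] := by
  obtain ⟨q, hq⟩ := hDne
  intro h
  have hmem : ((q, 0) : List α × ℕ) ∈ ePos D [] := by
    refine ⟨hq, by simp, by simp, by simp⟩
  rw [← h] at hmem
  have := hmem.2.1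
  simp at this
  exact h0 this

lemma slink_spec (D : Finset (List α)) (hDne : D.Nonempty) (x : List α) (h0 : x ≠ []) :
    slink D x <:+ x ∧ ¬ eqv D x (slink D x) ∧ (slink D x).length < x.length ∧
      ∀ y, y <:+ x → ¬ eqv D x y → y <:+ slink D x := by
  letI := Classical.propDecidable
  set p : List α → Bool := fun y => decide (¬ eqv D x y) with hp
  have hslink : slink D x = (x.tails.filter p).headI := rfl
  have hnil : p [] = true := by simp [hp, not_eqv_nil D hDne x h0]
  have hfil_ne : x.tails.filter p ≠ [] := by
    intro h
    have : ([] : List α) ∈ x.tails.filter p := by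
      rw [List.mem_filter]
      exact ⟨(List.mem_tails _ _).mpr List.nil_suffix, hnil⟩
    rw [h] at this; exact List.not_mem_nil this
  have hmem : slink D x ∈ x.tails.filter p := by
    rw [hslink]
    cases hcase : x.tails.filter p with
    | nil => exact absurd hcase hfil_ne
    | cons a t => simp [hcase]
  rw [List.mem_filter] at hmem
  have hsuf : slink D x <:+ x := (List.mem_tails _ _).mp hmem.1
  have hneqv : ¬ eqv D x (slink D x) := by
    have := hmem.2; simpa [hp] using this
  have hlt : (slink D x).length < x.length := by
    refine lt_of_le_of_ne hsuf.length_le ?_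
    intro hlen
    exact hneqv (by rw [List.IsSuffix.eq_of_length hsuf hlen]; rfl)
  refine ⟨hsuf, hneqv, hlt, ?_⟩
  intro y hy hny
  rw [hslink]
  exact suffix_headI_filter p x y hy (by simp [hp, hny])

/-- Let `x ∈ Substr D` be nonempty with suffix-link chain
`x_i = (slink D)^[i] x`. Then for every suffix `y` of `x` there is an `i ≥ 0`
such that `x_i` is defined (all of `x_0, …, x_{i-1}` are nonempty) and `y ≡_D x_i`. -/
theorem stmt4 [Fintype α] (D : Finset (List α)) (hD : ∀ p ∈ D, p ≠ [])
    (hDne : D.Nonempty) (x : List α) (hx : x ∈ Substr D) (h0 : x ≠ []) :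
    ∀ y, y <:+ x →
      ∃ i, (∀ j < i, (slink D)^[j] x ≠ []) ∧ eqv D y ((slink D)^[i] x) := by
  have main : ∀ n (x : List α), x.length ≤ n → x ∈ Substr D → x ≠ [] →
      ∀ y, y <:+ x →
        ∃ i, (∀ j < i, (slink D)^[j] x ≠ []) ∧ eqv D y ((slink D)^[i] x) := by
    intro n
    induction n with
    | zero =>
      intro x hlen _ h0 _ _
      exact absurd (List.length_eq_zero_iff.mp (Nat.le_zero.mp hlen)) h0
    | succ n ih =>
      intro x hlen hx h0 y hy
      by_cases heq : eqv D x y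
      · exact ⟨0, by simp, heq.symm⟩
      · obtain ⟨hsuf, hneqv, hlt, hmax⟩ := slink_spec D hDne x h0
        set s := slink D x with hs
        have hys : y <:+ s := hmax y hy heq
        by_cases hsnil : s = []
        · have : y = [] := List.suffix_nil.mp (hsnil ▸ hys)
          refine ⟨1, ?_, ?_⟩
          · intro j hj
            interval_cases j
            simpa using h0
          · rw [Function.iterate_one, ← hs, hsnil, this]; rfl
        · have hslen : s.length ≤ n := by omega
          have hsx : s ∈ Substr D := by
            obtain ⟨q, hq, hxq⟩ := hx
            exact ⟨q, hq, hsuf.isInfix.trans hxq⟩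
          obtain ⟨i, hchain, heqv2⟩ := ih s hslen hsx hsnil y hys
          refine ⟨i + 1, ?_, ?_⟩
          · intro j hj
            cases j with
            | zero => simpa using h0
            | succ k =>
              rw [Function.iterate_succ_apply]
              exact hchain k (by omega)
          · rw [Function.iterate_succ_apply]
            exact heqv2
  exact main x.length x le_rfl hx h0
end

section
/- Let a, b ∈ Σ be distinct symbols with |Σ| ≥ 3, let h ≥ 1, let D = { (ab)^i a^j c : 1 ≤ i ≤ h, j ∈ {0,1}, c ∈ Σ∖{a,b} }, and let p = (ba)^h. Then Substr(D ∪ {p}) = Substr(D), and the number of ≡_{D∪{p}}-equivalence classes on Substr(D ∪ {p}) is at least the number of ≡_D-equivalence classes on Substr(D) plus 2h. -/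
variable {α : Type*}

/-- The `≡_D`-equivalence class `[x]_D` of `x` within `Substr D`. -/
def cls (D : Finset (List α)) (x : List α) : Set (List α) :=
  {y | y ∈ Substr D ∧ eqv D y x}

/-- `wpow w i` is the `i`-fold concatenation `w^i`. -/
def wpow (w : List α) (i : ℕ) : List α := (List.replicate i w).flatten

/-- The dictionary `D = { (ab)^i a^j c : 1 ≤ i ≤ h, j ∈ {0,1}, c ∈ Σ \ {a,b} }`. -/
def lowDict [Fintype α] [DecidableEq α] (a b : α) (h : ℕ) : Finset (List α) :=
  ((Finset.Icc 1 h) ×ˢ (Finset.range 2) ×ˢ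
      (Finset.univ.filter fun c => c ≠ a ∧ c ≠ b)).image
    (fun t => wpow [a, b] t.1 ++ List.replicate t.2.1 a ++ [t.2.2])

lemma wpow_zero (w : List α) : wpow w 0 = [] := rfl
lemma wpow_succ (w : List α) (k : ℕ) : wpow w (k+1) = w ++ wpow w k := by
  simp [wpow, List.replicate_succ]
lemma wpow_add (w : List α) (m n : ℕ) : wpow w (m+n) = wpow w m ++ wpow w n := by
  rw [wpow, wpow, wpow, List.replicate_add, List.flatten_append]
lemma wpow_length (x y : α) (k : ℕ) : (wpow [x,y] k).length = 2*k := by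
  induction k with
  | zero => rfl
  | succ k ih =>
    rw [wpow_succ]
    simp only [List.length_append, List.length_cons, List.length_nil, ih]
    omega
lemma wpow_prefix (w : List α) {k h : ℕ} (hkh : k ≤ h) : wpow w k <+: wpow w h :=
  ⟨wpow w (h - k), by rw [← wpow_add]; congr 1; omega⟩
lemma cons_a_wpow (a b : α) (k : ℕ) : a :: wpow [b,a] k = wpow [a,b] k ++ [a] := by
  induction k with
  | zero => rfl
  | succ k ih =>
    rw [wpow_succ, wpow_succ]
    simp only [List.cons_append, List.append_assoc] at *
    simp [ih]

/-- In a string of the form `(ab)^i a^j c` with `b ∉ {a,c}`, every `b` is preceded by `a`. -/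
lemma before_b {a b c : α} (hba : b ≠ a) (hbc : b ≠ c) (i j : ℕ) :
    ∀ t, (wpow [a,b] i ++ (List.replicate j a ++ [c]))[t]? = some b →
      ∃ t', t = t' + 1 ∧ (wpow [a,b] i ++ (List.replicate j a ++ [c]))[t']? = some a := by
  induction i with
  | zero =>
    intro t hbt
    exfalso
    rw [wpow_zero, List.nil_append] at hbt
    have := List.mem_of_getElem? hbt
    simp at this
    rcases this with h | h
    · exact hba h.2
    · exact hbc h
  | succ i ih =>
    intro t hbt
    rw [wpow_succ] at hbt ⊢
    match t with
    | 0 => simp at hbt; exact absurd hbt.symm hba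
    | 1 => exact ⟨0, rfl, by simp⟩
    | (n+2) =>
      simp only [List.cons_append, List.getElem?_cons_succ] at hbt
      obtain ⟨t', rfl, ha⟩ := ih n hbt
      exact ⟨t' + 2, rfl, by simpa using ha⟩

lemma ePos_suffix (E : Finset (List α)) {x y : List α} (hyx : y <:+ x) :
    ePos E x ⊆ ePos E y := by
  rintro ⟨q, m⟩ ⟨hq, hlm, hmq, hx⟩
  dsimp only at *
  obtain ⟨t, ht⟩ := hyx
  subst ht
  have hlen : y.length ≤ (t ++ y).length := by simp
  refine ⟨hq, hlen.trans hlm, hmq, ?_⟩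
  have h1 : (q.take m).drop (m - y.length) = ((q.take m).drop (m - (t ++ y).length)).drop t.length := by
    rw [List.drop_drop]; congr 1; simp at hlm ⊢; omega
  rw [h1, ← hx, List.drop_left]

/-- key occurrence-extension lemma -/
lemma ePos_cons_a (E : Finset (List α)) {a b : α}
    (HE : ∀ q ∈ E, ∀ t, q[t]? = some b → ∃ t', t = t' + 1 ∧ q[t']? = some a)
    (x : List α) (hx0 : x[0]? = some b) :
    ePos E x = ePos E (a :: x) := by
  apply Set.Subset.antisymm
  · rintro ⟨q, m⟩ ⟨hq, hlm, hmq, hx⟩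
    dsimp only at *
    have hxpos : 0 < x.length := by
      cases x with
      | nil => simp at hx0
      | cons _ _ => simp
    -- q[m - x.length]? = some b
    have hqb : q[m - x.length]? = some b := by
      have e : x[0]? = ((q.take m).drop (m - x.length))[0]? := by
        conv_lhs => rw [hx]
      rw [List.getElem?_drop, Nat.add_zero,
        List.getElem?_take_of_lt (by omega : m - x.length < m)] at e
      rw [← e]; exact hx0

    obtain ⟨t', ht', hqa⟩ := HE q hq (m - x.length) hqb
    have hm1 : x.length + 1 ≤ m := by omega
    refine ⟨hq, by simpa using hm1, hmq, ?_⟩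
    dsimp only
    have ht'' : t' = m - (x.length + 1) := by omega
    have htlt : t' < (q.take m).length := by
      rw [List.length_take]; omega
    rw [List.length_cons, List.drop_eq_getElem_cons (by rw [List.length_take]; omega : m - (x.length+1) < (q.take m).length)]
    have e1 : (q.take m)[m - (x.length+1)] = a := by
      have : (q.take m)[m - (x.length+1)]? = some a := by
        rw [List.getElem?_take_of_lt (by omega : m - (x.length+1) < m)]
        rw [← ht'']; exact hqa
      rw [List.getElem?_eq_getElem (by rw [List.length_take]; omega)] at this
      exact Option.some_injective _ this
    rw [e1]
    have e2 : m - (x.length + 1) + 1 = m - x.length := by omega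
    rw [e2, ← hx]
  · exact ePos_suffix E ⟨[a], rfl⟩


section Helpers2

variable {α : Type*}

lemma eqv_refl (E : Finset (List α)) (x : List α) : eqv E x x := rfl
lemma eqv_symm {E : Finset (List α)} {x y : List α} (h : eqv E x y) : eqv E y x := Eq.symm h
lemma eqv_trans {E : Finset (List α)} {x y z : List α} (h1 : eqv E x y) (h2 : eqv E y z) :
    eqv E x z := Eq.trans h1 h2

lemma cls_eq_of_eqv {E : Finset (List α)} {x y : List α} (h : eqv E x y) :
    cls E x = cls E y := by
  unfold cls
  ext z
  simp only [Set.mem_setOf_eq]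
  exact ⟨fun ⟨h1, h2⟩ => ⟨h1, eqv_trans h2 h⟩, fun ⟨h1, h2⟩ => ⟨h1, eqv_trans h2 (eqv_symm h)⟩⟩

lemma eqv_of_cls_eq {E : Finset (List α)} {x y : List α} (hx : x ∈ Substr E)
    (hcls : cls E x = cls E y) : eqv E x y := by
  have hxx : x ∈ cls E x := ⟨hx, eqv_refl E x⟩
  rw [hcls] at hxx
  exact hxx.2

lemma eqv_restrict {p : List α} {E : Finset (List α)} {x y : List α}
    [DecidableEq α] (h : eqv (insert p E) x y) : eqv E x y := by
  have key : ∀ z : List α, ePos E z = ePos (insert p E) z ∩ {qj | qj.1 ∈ E} := by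
    intro z
    ext qj
    simp only [ePos, Set.mem_setOf_eq, Set.mem_inter_iff, Finset.mem_insert]
    tauto
  show ePos E x = ePos E y
  rw [key, key]
  have h' : ePos (insert p E) x = ePos (insert p E) y := h
  rw [h']

lemma substr_finite (E : Finset (List α)) : (Substr E).Finite := by
  have hsub : Substr E ⊆ ⋃ q ∈ (E : Set (List α)), {x | List.Sublist x q} := by
    rintro x ⟨q, hq, hx⟩
    exact Set.mem_biUnion hq hx.sublist
  refine Set.Finite.subset (E.finite_toSet.biUnion fun q _ => ?_) hsub
  refine Set.Finite.subset q.sublists.finite_toSet fun x hx => ?_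
  simpa [List.mem_sublists] using hx

end Helpers2

/-- With `|Σ| ≥ 3`, `a ≠ b`, `h ≥ 1`,
`D = { (ab)^i a^j c : 1 ≤ i ≤ h, j ∈ {0,1}, c ∈ Σ \ {a,b} }` and `p = (ba)^h`:
`Substr (D ∪ {p}) = Substr D`, and the number of `≡_{D∪{p}}`-classes on
`Substr (D ∪ {p})` is at least the number of `≡_D`-classes on `Substr D` plus `2h`. -/
theorem stmt12 [Fintype α] [DecidableEq α] (hcard : 3 ≤ Fintype.card α)
    (a b : α) (hab : a ≠ b) (h : ℕ) (hh : 1 ≤ h) :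
    Substr (insert (wpow [b, a] h) (lowDict a b h)) = Substr (lowDict a b h) ∧
    {C : Set (List α) | ∃ x ∈ Substr (lowDict a b h), C = cls (lowDict a b h) x}.ncard
        + 2 * h ≤
      {C : Set (List α) | ∃ x ∈ Substr (insert (wpow [b, a] h) (lowDict a b h)),
        C = cls (insert (wpow [b, a] h) (lowDict a b h)) x}.ncard := by
  set p : List α := wpow [b, a] h with hp
  set D : Finset (List α) := lowDict a b h with hD
  set D' : Finset (List α) := insert p D with hD'
  -- a third character
  obtain ⟨c₀, hc₀a, hc₀b⟩ : ∃ c : α, c ≠ a ∧ c ≠ b := by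
    by_contra hcon
    push_neg at hcon
    have hsub : (Finset.univ : Finset α) ⊆ {a, b} := by
      intro x _
      rcases eq_or_ne x a with rfl | hxa
      · simp
      · simp [hcon x hxa]
    have h2 : ({a, b} : Finset α).card ≤ 2 := by
      apply (Finset.card_insert_le _ _).trans
      simp
    have := (Finset.card_le_card hsub).trans h2
    rw [Finset.card_univ] at this
    omega
  have hplen : p.length = 2 * h := wpow_length b a h
  have hp0 : p[0]? = some b := by
    obtain ⟨h', rfl⟩ : ∃ h', h = h' + 1 := ⟨h - 1, by omega⟩
    rw [hp, wpow_succ]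
    rfl
  -- the big pattern Q
  set Q : List α := wpow [a, b] h ++ List.replicate 1 a ++ [c₀] with hQdef
  have hQmem : Q ∈ D := by
    rw [hD, lowDict]
    refine Finset.mem_image.mpr ⟨(h, 1, c₀), ?_, rfl⟩
    simp [Finset.mem_product, hh, hc₀a, hc₀b]
  have hQ : Q = a :: (p ++ [c₀]) := by
    rw [hQdef, hp]
    rw [List.replicate_one, ← cons_a_wpow a b h]
    simp
  have hQlen : Q.length = 2 * h + 2 := by
    rw [hQ]
    simp [hplen]
  have hpQ : p <:+: Q := ⟨[a], [c₀], by rw [hQ]; simp⟩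
  -- Part 1
  have part1 : Substr D' = Substr D := by
    apply Set.Subset.antisymm
    · rintro x ⟨q, hq, hxq⟩
      rcases Finset.mem_insert.mp hq with rfl | hqD
      · exact ⟨Q, hQmem, hxq.trans hpQ⟩
      · exact ⟨q, hqD, hxq⟩
    · rintro x ⟨q, hq, hxq⟩
      exact ⟨q, Finset.mem_insert_of_mem hq, hxq⟩
  -- the character property of D
  have HD : ∀ q ∈ D, ∀ t, q[t]? = some b → ∃ t', t = t' + 1 ∧ q[t']? = some a := by
    intro q hq
    rw [hD, lowDict, Finset.mem_image] at hq
    obtain ⟨⟨i, j, c⟩, hmem, rfl⟩ := hq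
    simp only [Finset.mem_product, Finset.mem_filter] at hmem
    intro t ht
    rw [List.append_assoc] at ht
    obtain ⟨t', rfl, ha⟩ := before_b (Ne.symm hab) (Ne.symm hmem.2.2.2.2) i j t ht
    refine ⟨t', rfl, ?_⟩
    rw [List.append_assoc]
    exact ha
  -- membership of the family strings
  have hvS : ∀ n ≤ 2 * h, a :: p.take n ∈ Substr D := by
    intro n hn
    have h1 : a :: p.take n = (a :: p).take (n + 1) := by
      rw [List.take_succ_cons]
    have h2 : (a :: p) <+: Q := ⟨[c₀], by rw [hQ]; simp⟩
    exact ⟨Q, hQmem, (h1 ▸ (((a :: p).take_prefix (n + 1)).trans h2)).isInfix⟩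
  have hvS' : ∀ n ≤ 2 * h, p.take n ∈ Substr D := by
    intro n hn
    obtain ⟨Q', hQ', hinf⟩ := hvS n hn
    exact ⟨Q', hQ', (List.suffix_cons a (p.take n)).isInfix.trans hinf⟩
  have hvlen : ∀ n ≤ 2 * h, (p.take n).length = n := by
    intro n hn
    rw [List.length_take, hplen]
    omega
  have hv0 : ∀ n, 1 ≤ n → (p.take n)[0]? = some b := by
    intro n hn
    rw [List.getElem?_take_of_lt (by omega : 0 < n)]
    exact hp0
  -- the D-equivalences
  have heqv : ∀ n, 1 ≤ n → eqv D (p.take n) (a :: p.take n) := by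
    intro n hn
    exact ePos_cons_a D HD (p.take n) (hv0 n hn)
  -- the pairs are separated in D'
  have hnotD' : ∀ n, 1 ≤ n → n ≤ 2 * h → ¬ eqv D' (p.take n) (a :: p.take n) := by
    intro n h1n hn2 he
    have hwit : (p, n) ∈ ePos D' (p.take n) := by
      refine ⟨Finset.mem_insert_self p D, ?_, ?_, ?_⟩
      · rw [hvlen n hn2]
      · rw [hplen]; omega
      · rw [hvlen n hn2]
        simp
    have h2 : ePos D' (p.take n) = ePos D' (a :: p.take n) := he
    rw [h2] at hwit
    have := hwit.2.1
    rw [List.length_cons, hvlen n hn2] at this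
    omega
  -- distinctness of the family in D
  have hdist : ∀ n m, 1 ≤ n → n < m → m ≤ 2 * h → ¬ eqv D (p.take n) (p.take m) := by
    intro n m h1n hnm hm2 he
    have hn2 : n ≤ 2 * h := by omega
    have hQtake : Q.take (n + 1) = a :: p.take n := by
      rw [hQ, List.take_succ_cons, List.take_append_of_le_length (by rw [hplen]; omega)]
    have hwit : (Q, n + 1) ∈ ePos D (p.take n) := by
      refine ⟨hQmem, ?_, ?_, ?_⟩
      · rw [hvlen n hn2]; omega
      · rw [hQlen]; omega
      · rw [hvlen n hn2, hQtake]
        simp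
    have h2 : ePos D (p.take n) = ePos D (p.take m) := he
    rw [h2] at hwit
    obtain ⟨_, hlm, _, hstr⟩ := hwit
    rw [hvlen m hm2] at hlm hstr
    have hmn1 : m = n + 1 := by omega
    subst hmn1
    rw [Nat.sub_self, List.drop_zero, hQtake] at hstr
    have : (p.take (n + 1))[0]? = (a :: p.take n)[0]? := by rw [hstr]
    rw [hv0 (n + 1) (by omega)] at this
    simp at this
    exact hab this.symm
  have hdist' : ∀ n m, 1 ≤ n → 1 ≤ m → n ≤ 2 * h → m ≤ 2 * h → n ≠ m →
      ¬ eqv D (p.take n) (p.take m) := by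
    intro n m h1n h1m hn2 hm2 hne he
    rcases Nat.lt_or_ge n m with hlt | hge
    · exact hdist n m h1n hlt hm2 he
    · exact hdist m n h1m (by omega) hn2 (eqv_symm he)
  -- rewrite the two class-sets as images
  have hA : {C : Set (List α) | ∃ x ∈ Substr D, C = cls D x} = cls D '' Substr D := by
    ext C
    simp only [Set.mem_setOf_eq, Set.mem_image]
    constructor
    · rintro ⟨x, hx, rfl⟩; exact ⟨x, hx, rfl⟩
    · rintro ⟨x, hx, rfl⟩; exact ⟨x, hx, rfl⟩
  have hB : {C : Set (List α) | ∃ x ∈ Substr D', C = cls D' x} = cls D' '' Substr D := by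
    ext C
    simp only [Set.mem_setOf_eq, Set.mem_image, part1]
    constructor
    · rintro ⟨x, hx, rfl⟩; exact ⟨x, hx, rfl⟩
    · rintro ⟨x, hx, rfl⟩; exact ⟨x, hx, rfl⟩
  refine ⟨part1, ?_⟩
  rw [hA, hB]
  set A : Set (Set (List α)) := cls D '' Substr D with hAdef
  set B : Set (Set (List α)) := cls D' '' Substr D with hBdef
  have hSfin : (Substr D).Finite := substr_finite D
  have hBfin : B.Finite := hSfin.image _
  -- the projection map
  set π : Set (List α) → Set (List α) :=
    fun C => {y | y ∈ Substr D ∧ ∃ z ∈ C, eqv D y z} with hπdef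
  have hπ : ∀ x ∈ Substr D, π (cls D' x) = cls D x := by
    intro x hx
    ext y
    simp only [hπdef, cls, Set.mem_setOf_eq]
    constructor
    · rintro ⟨hyS, z, ⟨hzS, hz⟩, hyz⟩
      exact ⟨hyS, eqv_trans hyz (eqv_restrict hz)⟩
    · rintro ⟨hyS, hyx⟩
      refine ⟨hyS, x, ⟨?_, eqv_refl D' x⟩, hyx⟩
      rw [part1]
      exact hx
  -- the set of new classes
  set N : Set (Set (List α)) := (fun n => cls D' (a :: p.take n)) '' Set.Icc 1 (2 * h)
    with hNdef
  -- cls D' (p.take n) is never in N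
  have hc1 : ∀ n m, 1 ≤ n → n ≤ 2 * h → 1 ≤ m → m ≤ 2 * h →
      cls D' (p.take n) ≠ cls D' (a :: p.take m) := by
    intro n m h1n hn2 h1m hm2 hcl
    have hvD' : p.take n ∈ Substr D' := by rw [part1]; exact hvS' n hn2
    have he' : eqv D' (p.take n) (a :: p.take m) := eqv_of_cls_eq hvD' hcl
    rcases eq_or_ne n m with rfl | hne
    · exact hnotD' n h1n hn2 he'
    · have : eqv D (p.take n) (p.take m) :=
        eqv_trans (eqv_restrict he') (eqv_symm (heqv m h1m))
      exact hdist' n m h1n h1m hn2 hm2 hne this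
  -- the new classes are pairwise distinct
  have hc2 : ∀ n m, 1 ≤ n → n ≤ 2 * h → 1 ≤ m → m ≤ 2 * h → n ≠ m →
      cls D' (a :: p.take n) ≠ cls D' (a :: p.take m) := by
    intro n m h1n hn2 h1m hm2 hne hcl
    have hvD' : a :: p.take n ∈ Substr D' := by rw [part1]; exact hvS n hn2
    have he' : eqv D' (a :: p.take n) (a :: p.take m) := eqv_of_cls_eq hvD' hcl
    have : eqv D (p.take n) (p.take m) :=
      eqv_trans (heqv n h1n) (eqv_trans (eqv_restrict he') (eqv_symm (heqv m h1m)))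
    exact hdist' n m h1n h1m hn2 hm2 hne this
  have hNcard : N.ncard = 2 * h := by
    rw [hNdef, Set.ncard_image_of_injOn]
    · rw [← Finset.coe_Icc, Set.ncard_coe_finset, Nat.card_Icc]
      omega
    · intro n hn m hm heq
      simp only [Set.mem_Icc] at hn hm
      by_contra hne
      exact hc2 n m hn.1 hn.2 hm.1 hm.2 hne heq
  have hNB : N ⊆ B := by
    rintro _ ⟨n, hn, rfl⟩
    simp only [Set.mem_Icc] at hn
    exact ⟨a :: p.take n, hvS n hn.2, rfl⟩
  -- A is covered by π of the old classes
  have hsub : A ⊆ π '' (B \ N) := by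
    rintro _ ⟨x, hx, rfl⟩
    by_cases hxN : cls D' x ∈ N
    · obtain ⟨m, hm, hcl⟩ := hxN
      simp only [Set.mem_Icc] at hm
      have hxD' : x ∈ Substr D' := by rw [part1]; exact hx
      have h1 : eqv D x (a :: p.take m) := eqv_restrict (eqv_of_cls_eq hxD' hcl.symm)
      have h2 : cls D x = cls D (p.take m) :=
        (cls_eq_of_eqv h1).trans (cls_eq_of_eqv (eqv_symm (heqv m hm.1)))
      refine ⟨cls D' (p.take m), ⟨⟨p.take m, hvS' m hm.2, rfl⟩, ?_⟩, ?_⟩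
      · rintro ⟨k, hk, hclk⟩
        simp only [Set.mem_Icc] at hk
        exact hc1 m k hm.1 hm.2 hk.1 hk.2 hclk.symm
      · rw [hπ (p.take m) (hvS' m hm.2), h2]
    · exact ⟨cls D' x, ⟨⟨x, hx, rfl⟩, hxN⟩, hπ x hx⟩
  -- final counting
  have hBNfin : (B \ N).Finite := hBfin.diff
  calc A.ncard + 2 * h ≤ (π '' (B \ N)).ncard + N.ncard := by
        rw [hNcard]
        exact Nat.add_le_add_right (Set.ncard_le_ncard hsub (hBNfin.image π)) _
    _ ≤ (B \ N).ncard + N.ncard :=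
        Nat.add_le_add_right (Set.ncard_image_le hBNfin) _
    _ = B.ncard := Set.ncard_diff_add_ncard_of_subset hNB hBfin
end
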